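/- arXiv:2203.02566 — 3 statements merged into one kernel-verified Lean document; each statement's English description precedes it below -/
import Mathlib

section
/- Every nontrivial finite subgroup of Γ = ℤⁿ ⋊_ρ ℤ/p is cyclic of order p. -/
/-!
An element of `ℤⁿ ⋊ ℤ/p` mapping to `0` in `ℤ/p` lies in the torsion-free group `ℤⁿ`, so a
finite subgroup meets `ℤⁿ` trivially and embeds into `ℤ/p`. Being nontrivial, it then has order
`p`, hence is cyclic.
-/

/-- The multiplicative group structure on `AddAut A` that Mathlib provided in the older version
(now Mathlib gives `AddAut A` an additive group structure instead). -/
instance addAutOldGroup {A : Type*} [Add A] : Group (AddAut A) where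
  mul g h := AddEquiv.trans h g
  one := AddEquiv.refl _
  inv := AddEquiv.symm
  mul_assoc _ _ _ := rfl
  one_mul _ := rfl
  mul_one _ := rfl
  inv_mul_cancel := AddEquiv.self_trans_symm

/-- The monoid homomorphism sending an additive automorphism of `A` to the corresponding
multiplicative automorphism of `Multiplicative A`. -/
def addAutToMulAut {A : Type*} [AddGroup A] : AddAut A →* MulAut (Multiplicative A) where
  toFun e := AddEquiv.toMultiplicative e
  map_one' := rfl
  map_mul' _ _ := rfl

/-- The semidirect product `Γ = ℤⁿ ⋊_ρ ℤ/p` (written multiplicatively), with multiplication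
`(x,g)·(x',g') = (x + ρ(g)x', g+g')`. -/
abbrev Gam (p n : ℕ) (ρ : Multiplicative (ZMod p) →* AddAut (Fin n → ℤ)) : Type :=
  (Multiplicative (Fin n → ℤ)) ⋊[addAutToMulAut.comp ρ] (Multiplicative (ZMod p))

namespace SemidirectProduct

variable {N G : Type*} [Group N] [Group G] {φ : G →* MulAut N}

theorem eq_one_of_isOfFinOrder_of_rightHom_eq_one [IsMulTorsionFree N] {g : N ⋊[φ] G}
    (hg : IsOfFinOrder g) (hg₁ : rightHom g = 1) : g = 1 := by
  obtain ⟨x, rfl⟩ : g ∈ (inl : N →* N ⋊[φ] G).range := by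
    rwa [range_inl_eq_ker_rightHom, MonoidHom.mem_ker]
  rw [(isOfFinOrder_iff_eq_one x).mp (inl_injective.isOfFinOrder_iff.mp hg), map_one]

theorem injective_rightHom_comp_subtype_of_finite [IsMulTorsionFree N]
    (H : Subgroup (N ⋊[φ] G)) [Finite H] : Function.Injective (rightHom.comp H.subtype) := by
  refine (injective_iff_map_eq_one _).mpr fun h hh ↦ Subtype.ext ?_
  exact eq_one_of_isOfFinOrder_of_rightHom_eq_one
    (H.subtype.isOfFinOrder (isOfFinOrder_of_finite h)) hh

end SemidirectProduct

theorem Nat.card_eq_of_injective_of_prime {K G : Type*} [Group K] [Group G] [Nontrivial K]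
    (f : K →* G) (hf : Function.Injective f) (hp : (Nat.card G).Prime) :
    Nat.card K = Nat.card G := by
  refine (hp.eq_one_or_self_of_dvd _ (Subgroup.card_dvd_of_injective f hf)).resolve_left ?_
  rw [Nat.card_eq_one_iff_unique]
  exact fun ⟨_, _⟩ ↦ not_subsingleton K ‹_›

/-- every nontrivial finite subgroup of `Γ = ℤⁿ ⋊_ρ ℤ/p` is cyclic of order `p`. -/
theorem stmt0 (p n : ℕ) [Fact p.Prime]
    (ρ : Multiplicative (ZMod p) →* AddAut (Fin n → ℤ))
    (H : Subgroup (Gam p n ρ)) (hne : H ≠ ⊥) (hfin : Finite H) :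
    IsCyclic H ∧ Nat.card H = p := by
  have : Nontrivial H := H.nontrivial_iff_ne_bot.mpr hne
  have hcard : Nat.card H = p := by
    have hp : (Nat.card (Multiplicative (ZMod p))).Prime := by
      simpa using Fact.out (p := p.Prime)
    simpa using Nat.card_eq_of_injective_of_prime _
      (SemidirectProduct.injective_rightHom_comp_subtype_of_finite H) hp
  exact ⟨isCyclic_of_prime_card hcard, hcard⟩
end

section
/- Let p be a prime and ζ a primitive p-th root of unity. Let ℤ/p act on ℤ[ζ] by a fixed generator acting as multiplication by ζ. Then the first group cohomology H¹(ℤ/p; ℤ[ζ]) is isomorphic to ℤ/p. -/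
/-- The homomorphism `ℤ/p → G` sending a fixed additive generator to `g`, where `g ^ p = 1`. -/
noncomputable def cycHom {G : Type*} [Group G] (p : ℕ) (g : G) (hg : g ^ p = 1) :
    Multiplicative (ZMod p) →* G :=
  AddMonoidHom.toMultiplicativeLeft
    (ZMod.lift p ⟨MonoidHom.toAdditiveRight (zpowersHom G g), by
      show Additive.ofMul ((zpowersHom G g) (Multiplicative.ofAdd (p : ℤ))) = 0
      have h1 : (zpowersHom G g) (Multiplicative.ofAdd (p : ℤ)) = 1 := by
        simp [zpowersHom_apply, hg]
      rw [h1]; rfl⟩)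

/-- The cyclotomic field `ℚ(ζ_p)`. -/
abbrev Kcyc (p : ℕ) [hp : Fact p.Prime] : Type := CyclotomicField p ℚ

/-- The ring of integers `ℤ[ζ_p]` of the cyclotomic field `ℚ(ζ_p)`. -/
abbrev Rcyc (p : ℕ) [Fact p.Prime] := NumberField.RingOfIntegers (Kcyc p)

/-- The monoid homomorphism from additive automorphisms of `M` to `ℤ`-linear endomorphisms. -/
def autToEnd {M : Type*} [AddCommGroup M] : Multiplicative (AddAut M) →* Module.End ℤ M where
  toFun e := (Multiplicative.toAdd e).toAddMonoidHom.toIntLinearMap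
  map_one' := rfl
  map_mul' _ _ := rfl

/-- The representation of `ℤ/p` on `ℤ[ζ]`, with the fixed generator acting by multiplication
by `ζ`. -/
noncomputable def zetaRepSelf (p : ℕ) [hp : Fact p.Prime] (ζ : Rcyc p)
    (hζ : IsPrimitiveRoot ζ p) :
    Representation ℤ (Multiplicative (ZMod p)) (Rcyc p) :=
  autToEnd.comp (cycHom p
    ((DistribMulAction.toAddAut ((Rcyc p)ˣ) (Rcyc p)) (hζ.isUnit hp.out.ne_zero).unit)
    (by
      rw [← map_pow]
      have hu : (hζ.isUnit hp.out.ne_zero).unit ^ p = 1 := Units.ext (by simp [hζ.pow_eq_one])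
      rw [hu, map_one]))

/-! For a finite cyclic group with generator `g`, `H¹(G, A) ≅ ker N / im (g - 1)`, `N` the norm.
On `ℤ[ζ]` the norm vanishes: `N` is fixed by `g`, so `(ζ - 1) N = 0` in the domain `ℤ[ζ]`.
Hence `H¹ ≅ ℤ[ζ] / (ζ - 1)`, which has order `p` because the field norm of `ζ - 1` is `± p`. -/

universe u

open CategoryTheory

namespace Rep.FiniteCyclicGroup

variable {k G : Type u} [CommRing k] [CommGroup G] [Fintype G] (A : Rep k G) (g : G)
  (hg : ∀ x, x ∈ Subgroup.zpowers g)

noncomputable def groupCohomologyIsoOddOfNormEqZero (hN : A.norm = 0) (i : ℕ) (hi : Odd i) :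
    groupCohomology A i ≅
      ModuleCat.of k (A ⧸ LinearMap.range (applyAsHom A g - 𝟙 A).hom.toLinearMap) :=
  groupCohomologyIsoOdd A g hg i hi ≪≫
    (subCompNormHom A g).asIsoHomologyι (by simp [hN]) ≪≫
    (subCompNormHom A g).moduleCatOpcyclesIso

end Rep.FiniteCyclicGroup

open NumberField in
lemma IsPrimitiveRoot.card_quotient_span_sub_one {p : ℕ} [Fact p.Prime] {K : Type*} [Field K]
    [NumberField K] [IsCyclotomicExtension {p} ℚ K] {ζ : 𝓞 K} (hζ : IsPrimitiveRoot ζ p) :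
    Nat.card (𝓞 K ⧸ Ideal.span {ζ - 1}) = p := by
  have : IsCyclotomicExtension {p ^ (0 + 1)} ℚ K := by rwa [zero_add, pow_one]
  have hζK : IsPrimitiveRoot (ζ : K) (p ^ (0 + 1)) := by
    simpa using hζ.map_of_injective RingOfIntegers.coe_injective
  rw [← Submodule.cardQuot_apply, ← Ideal.absNorm_apply]
  exact IsCyclotomicExtension.Rat.absNorm_span_zeta_sub_one p 0 hζK

lemma cycHom_ofAdd_one {G : Type*} [Group G] (p : ℕ) (g : G) (hg : g ^ p = 1) :
    cycHom p g hg (Multiplicative.ofAdd 1) = g := by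
  rw [← Int.cast_one]
  simp [cycHom, -Int.cast_one, ZMod.lift_coe]

lemma ZMod.mem_zpowers_ofAdd_one (p : ℕ) (x : Multiplicative (ZMod p)) :
    x ∈ Subgroup.zpowers (Multiplicative.ofAdd 1) :=
  Subgroup.mem_zpowers_iff.2 ⟨(Multiplicative.toAdd x).cast, by
    rw [← ofAdd_zsmul, zsmul_one, ZMod.intCast_zmod_cast, ofAdd_toAdd]⟩

section zetaRepSelf

variable (p : ℕ) [Fact p.Prime] {ζ : Rcyc p} (hζ : IsPrimitiveRoot ζ p)

lemma zetaRepSelf_ofAdd_one_apply (x : Rcyc p) :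
    zetaRepSelf p ζ hζ (Multiplicative.ofAdd 1) x = ζ * x := by
  rw [zetaRepSelf, MonoidHom.comp_apply, cycHom_ofAdd_one]
  rfl

lemma norm_zetaRepSelf_eq_zero : Representation.norm (zetaRepSelf p ζ hζ) = 0 := by
  ext x
  have hfix := (zetaRepSelf p ζ hζ).self_norm_apply (Multiplicative.ofAdd 1) x
  rw [zetaRepSelf_ofAdd_one_apply] at hfix
  have hζ1 : ζ - 1 ≠ 0 := sub_ne_zero.2 (hζ.ne_one (Fact.out : p.Prime).one_lt)
  simpa [hζ1] using (show (ζ - 1) * _ = 0 by rw [sub_mul, hfix, one_mul, sub_self])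

lemma Rep.norm_of_zetaRepSelf_eq_zero : (Rep.of (zetaRepSelf p ζ hζ)).norm = 0 :=
  Rep.hom_ext (Representation.IntertwiningMap.ext (LinearMap.ext fun x =>
    LinearMap.congr_fun (norm_zetaRepSelf_eq_zero p hζ) x))

lemma range_applyAsHom_sub_id_of_zetaRepSelf :
    LinearMap.range (Rep.applyAsHom (Rep.of (zetaRepSelf p ζ hζ)) (Multiplicative.ofAdd 1) -
      𝟙 _).hom.toLinearMap = (Ideal.span {ζ - 1}).restrictScalars ℤ := by
  ext x
  simp [Ideal.mem_span_singleton', Rep.sub_hom, Rep.applyAsHom, zetaRepSelf_ofAdd_one_apply,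
    mul_sub, mul_comm]

end zetaRepSelf

/-- the first group cohomology `H¹(ℤ/p; ℤ[ζ])`, with a generator of `ℤ/p` acting
on `ℤ[ζ]` by multiplication by the primitive `p`-th root of unity `ζ`, is isomorphic
to `ℤ/p`. -/
theorem stmt13 (p : ℕ) [hp : Fact p.Prime] (ζ : Rcyc p) (hζ : IsPrimitiveRoot ζ p) :
    Nonempty ((groupCohomology (Rep.of (zetaRepSelf p ζ hζ)) 1 : ModuleCat ℤ) ≃+ ZMod p) := by
  have hH1 := Rep.FiniteCyclicGroup.groupCohomologyIsoOddOfNormEqZero _ _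
    (ZMod.mem_zpowers_ofAdd_one p) (Rep.norm_of_zetaRepSelf_eq_zero p hζ) 1 odd_one
  have hquot := Submodule.quotEquivOfEq _ _ (range_applyAsHom_sub_id_of_zetaRepSelf p hζ)
  have : NeZero (p : ℚ) := ⟨by exact_mod_cast hp.out.ne_zero⟩
  have : IsCyclotomicExtension {p} ℚ (Kcyc p) := CyclotomicField.isCyclotomicExtension p ℚ
  have hcard := hζ.card_quotient_span_sub_one
  have : IsAddCyclic (Rcyc p ⧸ Ideal.span {ζ - 1}) := isAddCyclic_of_prime_card hcard
  obtain ⟨g, hg⟩ := IsAddCyclic.exists_generator (α := Rcyc p ⧸ Ideal.span {ζ - 1})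
  exact ⟨hH1.toLinearEquiv.toAddEquiv.trans <| hquot.toAddEquiv.trans <|
    (Submodule.Quotient.restrictScalarsEquiv ℤ _).toAddEquiv.trans
      (zmodAddEquivOfGenerator hg hcard).symm⟩
end

section
/- Let p be a prime and 1 ≤ m ≤ p−1. Let ℤ/p act on the group ring ℤ[ℤ/p] by left multiplication, and equip the m-th exterior power Λ^m_ℤ(ℤ[ℤ/p]) with the induced ℤ/p-action (each g ∈ ℤ/p acting as the m-th exterior power of the multiplication-by-g map), making Λ^m_ℤ(ℤ[ℤ/p]) a ℤ[ℤ/p]-module. Then Λ^m_ℤ(ℤ[ℤ/p]) is a free ℤ[ℤ/p]-module. -/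
/-!
The wedges `e_S = e_{s₁} ∧ ⋯ ∧ e_{sₘ}` over the `m`-element subsets `S ⊆ ℤ/p` form a
`ℤ`-basis of `Λ^m ℤ[ℤ/p]`, and `g ∈ ℤ/p` sends `e_S` to `±e_{g+S}`. A subgroup of
`ℤ/p` stabilising `S` is trivial or everything, and the latter would force `S = ℤ/p`; so
for `0 < m < p` the group permutes the lines `ℤ e_S` freely, and one wedge from each orbit
is a `ℤ[ℤ/p]`-basis.
-/

/-- The `ℤ`-linear map `Λ^n f : Λ^n M → Λ^n N` induced by `f : M → N` by functoriality of
exterior powers (the restriction of `ExteriorAlgebra.map f` to the `n`-th exterior power). -/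
noncomputable def extPowerMap {M N : Type*} [AddCommGroup M] [Module ℤ M]
    [AddCommGroup N] [Module ℤ N] (n : ℕ) (f : M →ₗ[ℤ] N) :
    (⋀[ℤ]^n M) →ₗ[ℤ] (⋀[ℤ]^n N) :=
  ((ExteriorAlgebra.map f).toLinearMap).restrict
    (p := ⋀[ℤ]^n M) (q := ⋀[ℤ]^n N) (by
      intro x hx
      have h : Submodule.map (ExteriorAlgebra.map f).toLinearMap (⋀[ℤ]^n M) ≤ ⋀[ℤ]^n N := by
        rw [Submodule.map_pow, ExteriorAlgebra.ι_range_map_map]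
        exact pow_le_pow_left' (Submodule.map_le_iff_le_comap.mpr
          (fun y _ => LinearMap.mem_range_self _ _)) n
      exact h ⟨x, hx, rfl⟩)

/-- The representation of `G` on the `r`-th exterior power `Λ^r M` (taken over `ℤ`) induced by
a representation of `G` on `M`, each `g` acting as the `r`-th exterior power of the action
of `g` on `M`. -/
noncomputable def extRep {G : Type*} [Monoid G] {M : Type*} [AddCommGroup M] [Module ℤ M]
    (ρ : Representation ℤ G M) (r : ℕ) : Representation ℤ G (⋀[ℤ]^r M) where
  toFun g := extPowerMap r (ρ g)
  map_one' := by
    apply LinearMap.ext; intro x; apply Subtype.ext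
    show (ExteriorAlgebra.map (ρ 1)).toLinearMap ↑x = ↑x
    rw [map_one, Module.End.one_eq_id, ExteriorAlgebra.map_id]
    rfl
  map_mul' g h := by
    apply LinearMap.ext; intro x; apply Subtype.ext
    show (ExteriorAlgebra.map (ρ (g * h))).toLinearMap ↑x =
      (ExteriorAlgebra.map (ρ g)).toLinearMap ((ExteriorAlgebra.map (ρ h)).toLinearMap ↑x)
    rw [map_mul]
    have h1 : ρ g * ρ h = (ρ g) ∘ₗ (ρ h) := rfl
    rw [h1, ← ExteriorAlgebra.map_comp_map]
    rfl

/-- The left-multiplication (regular) representation of `ℤ/p` on the group ring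
`ℤ[ℤ/p] = (ℤ/p) →₀ ℤ`. -/
noncomputable def regularRep (p : ℕ) :
    Representation ℤ (Multiplicative (ZMod p)) (Multiplicative (ZMod p) →₀ ℤ) :=
  { toFun := fun g => Finsupp.lmapDomain ℤ ℤ (g • · : Multiplicative (ZMod p) → Multiplicative (ZMod p))
    map_one' := by ext; simp
    map_mul' := fun x y => by ext; simp [mul_assoc] }

open MulAction Set.powersetCard
open scoped MonoidAlgebra

theorem Function.Injective.exists_perm_of_range_eq {I : Type*} {n : ℕ} {f g : Fin n → I}
    (hf : f.Injective) (hg : g.Injective) (h : Set.range f = Set.range g) :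
    ∃ σ : Equiv.Perm (Fin n), f = g ∘ σ :=
  ⟨(Equiv.ofInjective f hf).trans ((Equiv.setCongr h).trans (Equiv.ofInjective g hg).symm),
    funext fun i => by simp [Equiv.apply_ofInjective_symm hg]⟩

theorem Set.powersetCard.range_ofFinEmbEquiv_symm {I : Type*} [LinearOrder I] {n : ℕ}
    (s : Set.powersetCard I n) : Set.range (ofFinEmbEquiv.symm s) = s :=
  Set.ext (mem_range_ofFinEmbEquiv_symm_iff_mem s)

theorem Set.powersetCard.smul_eq_map {G I : Type*} [Group G] [MulAction G I] [DecidableEq I]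
    {n : ℕ} (g : G) (s : Set.powersetCard I n) :
    g • s = map n (toPerm g).toEmbedding s := by
  apply Subtype.ext
  rw [coe_smul, val_map, Finset.map_eq_image, Finset.smul_finset_def]
  rfl

theorem Set.powersetCard.stabilizer_eq_bot_of_prime_card {G : Type*} [Group G] [DecidableEq G]
    (hp : (Nat.card G).Prime) {n : ℕ} (hn : 0 < n) (hnG : n < Nat.card G)
    (s : Set.powersetCard G n) : stabilizer G s = ⊥ := by
  have := Fact.mk hp
  refine (stabilizer G s).eq_bot_or_eq_top_of_prime_card.resolve_right fun htop => ?_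
  obtain ⟨x, hx⟩ : (s : Finset G).Nonempty := by
    rw [← Finset.card_pos, card_eq]
    exact hn
  have hall : ∀ y : G, y ∈ (s : Finset G) := fun y => by
    have hy : (y * x⁻¹) • s = s := mem_stabilizer_iff.mp (htop ▸ Subgroup.mem_top _)
    rw [← hy, coe_smul]
    simpa using Finset.smul_mem_smul_finset (a := y * x⁻¹) hx
  have hcard : Nat.card G ≤ n := by
    rw [← Set.ncard_univ, ← ncard_eq s]
    exact Set.ncard_le_ncard (fun y _ => hall y) (Finset.finite_toSet _)
  omega

theorem exteriorPower.coe_map_apply {R M N : Type*} [CommRing R] [AddCommGroup M] [Module R M]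
    [AddCommGroup N] [Module R N] {n : ℕ} (f : M →ₗ[R] N) (x : ⋀[R]^n M) :
    (map n f x : ExteriorAlgebra R N) = ExteriorAlgebra.map f x := by
  suffices (⋀[R]^n N).subtype ∘ₗ map n f =
      (ExteriorAlgebra.map f).toLinearMap ∘ₗ (⋀[R]^n M).subtype from
    LinearMap.congr_fun this x
  ext v
  simp

theorem exteriorPower.exists_map_basis_eq_units_smul {R M N I J : Type*} [CommRing R]
    [AddCommGroup M] [Module R M] [AddCommGroup N] [Module R N] [LinearOrder I] [LinearOrder J]
    (b : Module.Basis I R M) (c : Module.Basis J R N) {f : M →ₗ[R] N} {σ : I ↪ J}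
    (hf : ∀ i, f (b i) = c (σ i)) {n : ℕ} (s : Set.powersetCard I n) :
    ∃ ε : Rˣ,
      map n f (b.exteriorPower n s) = ε • c.exteriorPower n (Set.powersetCard.map n σ s) := by
  obtain ⟨τ, hτ⟩ : ∃ τ : Equiv.Perm (Fin n),
      σ ∘ ofFinEmbEquiv.symm s = ofFinEmbEquiv.symm (Set.powersetCard.map n σ s) ∘ τ := by
    refine (σ.injective.comp (ofFinEmbEquiv.symm s).injective).exists_perm_of_range_eq
      (ofFinEmbEquiv.symm _).injective ?_
    rw [Set.range_comp, range_ofFinEmbEquiv_symm, range_ofFinEmbEquiv_symm, coe_map]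
  refine ⟨Units.map (Int.castRingHom R) (Equiv.Perm.sign τ), ?_⟩
  have hfb : f ∘ b = c ∘ σ := funext hf
  rw [basis_apply, basis_apply, map_apply_ιMulti_family, hfb, ιMulti_family, ιMulti_family,
    Function.comp_assoc, hτ, ← Function.comp_assoc, AlternatingMap.map_perm, Units.smul_def,
    Units.smul_def, Units.coe_map, MonoidHom.coe_coe, eq_intCast]
  exact (Int.cast_smul_eq_zsmul R _ _).symm

theorem MulAction.selfEquivOrbitsQuotientProd_symm_apply {G X : Type*} [Group G] [MulAction G X]
    (h : ∀ x : X, stabilizer G x = ⊥) (q : Quotient (orbitRel G X)) (g : G) :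
    (selfEquivOrbitsQuotientProd h).symm (q, g) = g • q.out := by
  simp [selfEquivOrbitsQuotientProd, selfEquivOrbitsQuotientProd',
    selfEquivSigmaOrbitsQuotientStabilizer', selfEquivSigmaOrbits', Equiv.sigmaCongrRight,
    QuotientGroup.quotientEquivSelf, Subgroup.quotientEquivOfEq]

theorem Representation.free_asModule_of_monomial_basis {k G V ι : Type*} [CommRing k] [Group G]
    [AddCommGroup V] [Module k V] [MulAction G ι] (ρ : Representation k G V)
    (b : Module.Basis ι k V) (hfree : ∀ i : ι, stabilizer G i = ⊥)
    (hb : ∀ (g : G) (i : ι), ∃ ε : kˣ, ρ g (b i) = ε • b (g • i)) :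
    Module.Free k[G] ρ.asModule := by
  choose ε hε using hb
  let Q := Quotient (orbitRel G ι)
  let e : (Σ _ : Q, G) ≃ ι :=
    (Equiv.sigmaEquivProd Q G).trans (selfEquivOrbitsQuotientProd hfree).symm
  have he (q : Q) (g : G) : e ⟨q, g⟩ = g • q.out :=
    selfEquivOrbitsQuotientProd_symm_apply hfree q g
  -- `c` is the rescaled basis `⟨q, g⟩ ↦ ρ g (b q.out)`, onto which `Φ` maps the standard
  -- `k`-basis `B`
  let c : Module.Basis (Σ _ : Q, G) k ρ.asModule :=
    ((b.map ρ.asModuleEquiv.symm).reindex e.symm).unitsSMul fun x => ε x.2 x.1.out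
  let B : Module.Basis (Σ _ : Q, G) k (Q →₀ k[G]) :=
    Finsupp.basis fun _ => MonoidAlgebra.basis G k
  let Φ : (Q →₀ k[G]) →ₗ[k[G]] ρ.asModule :=
    Finsupp.linearCombination k[G] fun q => ρ.asModuleEquiv.symm (b q.out)
  have hΦ : Φ.restrictScalars k = (B.equiv c (.refl _)).toLinearMap := by
    refine B.ext fun ⟨q, g⟩ => ?_
    rw [LinearMap.restrictScalars_apply, LinearEquiv.coe_coe, Module.Basis.equiv_apply]
    show Φ (B ⟨q, g⟩) = c ⟨q, g⟩
    simp only [B, Φ, c, Finsupp.coe_basis, MonoidAlgebra.basis_apply,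
      Finsupp.linearCombination_single, single_smul, one_smul, Module.Basis.unitsSMul_apply,
      Module.Basis.reindex_apply, Module.Basis.map_apply, e.symm_symm, he,
      LinearEquiv.apply_symm_apply, hε]
    rfl
  have hbij : Function.Bijective Φ := by
    have h := (B.equiv c (.refl _)).bijective
    rwa [← LinearEquiv.coe_coe, ← hΦ, LinearMap.coe_restrictScalars] at h
  exact .of_equiv (LinearEquiv.ofBijective Φ hbij)

theorem extPowerMap_apply {M N : Type*} [AddCommGroup M] [Module ℤ M] [AddCommGroup N]
    [Module ℤ N] {n : ℕ} (f : M →ₗ[ℤ] N) (x : ⋀[ℤ]^n M) :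
    extPowerMap n f x = exteriorPower.map n f x :=
  Subtype.ext (exteriorPower.coe_map_apply f x).symm

theorem regularRep_single (p : ℕ) (g x : Multiplicative (ZMod p)) (r : ℤ) :
    regularRep p g (Finsupp.single x r) = Finsupp.single (g * x) r := by
  simp [regularRep]

/-- for `1 ≤ m ≤ p−1`, the `m`-th exterior power `Λ^m_ℤ(ℤ[ℤ/p])`, viewed as a
`ℤ[ℤ/p]`-module via the action induced by left multiplication, is a free
`ℤ[ℤ/p]`-module. -/
theorem stmt14 (p : ℕ) [Fact p.Prime] (m : ℕ) (hm1 : 1 ≤ m) (hm2 : m ≤ p - 1) :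
    Module.Free (MonoidAlgebra ℤ (Multiplicative (ZMod p)))
      (extRep (regularRep p) m).asModule := by
  have hcard : Nat.card (Multiplicative (ZMod p)) = p := by simp
  have hfree := stabilizer_eq_bot_of_prime_card (G := Multiplicative (ZMod p))
    (hcard.symm ▸ Fact.out) (n := m) (by omega) (by omega)
  classical
  let _ : LinearOrder (Multiplicative (ZMod p)) := linearOrderOfSTO WellOrderingRel
  let b := Finsupp.basisSingleOne (R := ℤ) (ι := Multiplicative (ZMod p))
  refine Representation.free_asModule_of_monomial_basis (extRep (regularRep p) m)
    (b.exteriorPower m) hfree fun g s => ?_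
  rw [smul_eq_map]
  show ∃ ε : ℤˣ, extPowerMap m (regularRep p g) _ = _
  rw [extPowerMap_apply]
  exact exteriorPower.exists_map_basis_eq_units_smul b b (fun x => by simp [b, regularRep_single]) s
end
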